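/- arXiv:2305.08742 — 2 statements merged into one kernel-verified Lean document; each statement's English description precedes it below -/
import Mathlib

section
/- Let f : ℝⁿ → ℝ be twice continuously differentiable with m I ⪯ ∇²f(y) ⪯ M I for all y, where 0 < m ≤ M. Fix x, let H := ∇²f(x), P an n×N matrix of full column rank, H_r := Pᵀ H P, and Q the coarse truncated approximation of H_r with parameter p. Let λ̂ := (∇f(x)ᵀ P Q⁻¹ Pᵀ ∇f(x))^{1/2} and d̂ := −P Q⁻¹ Pᵀ ∇f(x). Then with step size t := m/M one has f(x + t d̂) − f(x) ≤ −(m/(2M)) λ̂². -/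
/-!
Along the ray `t ↦ x + t • d̂` the upper Hessian bound gives the quadratic majorant
`f (x + t d̂) ≤ f x + t ∇f(x)ᵀ d̂ + (M/2) t² ‖d̂‖²`. Write `d̂ = -P v` with `Q v = Pᵀ ∇f(x)`; then
`∇f(x)ᵀ d̂ = -vᵀ Q v = -λ̂²`. Since `Q` and `H_r` share their eigenvectors and the eigenvalues of
`Q` dominate those of `H_r`, the lower Hessian bound gives
`m ‖d̂‖² ≤ d̂ᵀ H d̂ = vᵀ H_r v ≤ vᵀ Q v = λ̂²`, and at `t = m/M` the majorant is at most
`-(m/(2M)) λ̂²`.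
-/

open Matrix

theorem le_add_mul_deriv_add_of_deriv_deriv_le {φ : ℝ → ℝ} (hφ : ContDiff ℝ 2 φ) {K : ℝ}
    (hK : ∀ t, deriv (deriv φ) t ≤ K) {t : ℝ} (ht : 0 ≤ t) :
    φ t ≤ φ 0 + t * deriv φ 0 + K * t ^ 2 / 2 := by
  have hφ' : ContDiff ℝ 1 (deriv φ) := hφ.iterate_deriv' 1 1
  set ψ : ℝ → ℝ := fun s => φ s - s * deriv φ 0 - K * s ^ 2 / 2
  have hψ : ∀ s, HasDerivAt ψ (deriv φ s - deriv φ 0 - K * s) s := fun s => by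
    refine (((hφ.differentiable two_ne_zero s).hasDerivAt.sub
      ((hasDerivAt_id s).mul_const (deriv φ 0))).sub
      (((hasDerivAt_pow 2 s).const_mul K).div_const 2)).congr_deriv ?_
    norm_num; ring
  have hψ_anti : AntitoneOn ψ (Set.Ici 0) :=
    antitoneOn_of_deriv_nonpos (convex_Ici 0)
      (fun s _ => (hψ s).continuousAt.continuousWithinAt)
      (fun s _ => (hψ s).differentiableAt.differentiableWithinAt)
      fun s hs => by
        rw [interior_Ici, Set.mem_Ioi] at hs
        rw [(hψ s).deriv]
        linarith [image_sub_le_mul_sub_of_deriv_le (hφ'.differentiable one_ne_zero) hK hs.le]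
  have hψt : ψ t ≤ ψ 0 := hψ_anti Set.self_mem_Ici ht ht
  simp only [ψ] at hψt
  linarith

theorem Matrix.PosSemidef.dotProduct_mulVec_le {ι : Type*} [Fintype ι] {A B : Matrix ι ι ℝ}
    (h : (B - A).PosSemidef) (v : ι → ℝ) : v ⬝ᵥ (A *ᵥ v) ≤ v ⬝ᵥ (B *ᵥ v) := by
  have := h.dotProduct_mulVec_nonneg v
  rw [sub_mulVec, dotProduct_sub, star_trivial] at this
  linarith

theorem dotProduct_smul_one_mulVec {ι : Type*} [Fintype ι] [DecidableEq ι] (c : ℝ)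
    (v : ι → ℝ) : v ⬝ᵥ ((c • (1 : Matrix ι ι ℝ)) *ᵥ v) = c * (v ⬝ᵥ v) := by
  rw [smul_mulVec, one_mulVec, dotProduct_smul, smul_eq_mul]

theorem comp_ray_shift {E α : Type*} [AddCommGroup E] [Module ℝ E] (f : E → α) (x d : E)
    (s : ℝ) : (fun t : ℝ => f (x + (s + t) • d)) = fun t => f ((x + s • d) + t • d) := by
  simp only [add_smul, add_assoc]

section Ray

variable {ι : Type*} [Fintype ι] {f : (ι → ℝ) → ℝ}

theorem deriv_comp_ray {grad : (ι → ℝ) → ι → ℝ}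
    (hgrad : ∀ x u : ι → ℝ, deriv (fun t : ℝ => f (x + t • u)) 0 = grad x ⬝ᵥ u)
    (x d : ι → ℝ) (s : ℝ) :
    deriv (fun t : ℝ => f (x + t • d)) s = grad (x + s • d) ⬝ᵥ d := by
  rw [← hgrad, ← comp_ray_shift, deriv_comp_const_add (f := fun t : ℝ => f (x + t • d)), add_zero]

theorem deriv_deriv_comp_ray {hess : (ι → ℝ) → Matrix ι ι ℝ}
    (hhessq : ∀ x u : ι → ℝ,
      iteratedDeriv 2 (fun t : ℝ => f (x + t • u)) 0 = u ⬝ᵥ (hess x *ᵥ u))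
    (x d : ι → ℝ) (s : ℝ) :
    deriv (deriv fun t : ℝ => f (x + t • d)) s = d ⬝ᵥ (hess (x + s • d) *ᵥ d) := by
  have := congrFun (iteratedDeriv_comp_const_add 2 (fun t : ℝ => f (x + t • d)) s) 0
  rw [← hhessq, ← comp_ray_shift, this, add_zero, iteratedDeriv_succ, iteratedDeriv_one]

theorem apply_add_smul_le_of_hessian_le [DecidableEq ι] {grad : (ι → ℝ) → ι → ℝ}
    {hess : (ι → ℝ) → Matrix ι ι ℝ} (hf : ContDiff ℝ 2 f)
    (hgrad : ∀ x u : ι → ℝ, deriv (fun t : ℝ => f (x + t • u)) 0 = grad x ⬝ᵥ u)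
    (hhessq : ∀ x u : ι → ℝ,
      iteratedDeriv 2 (fun t : ℝ => f (x + t • u)) 0 = u ⬝ᵥ (hess x *ᵥ u))
    {M : ℝ} (hupper : ∀ y, (M • (1 : Matrix ι ι ℝ) - hess y).PosSemidef)
    (x d : ι → ℝ) {t : ℝ} (ht : 0 ≤ t) :
    f (x + t • d) ≤ f x + t * (grad x ⬝ᵥ d) + M * (d ⬝ᵥ d) * t ^ 2 / 2 := by
  have hray : ContDiff ℝ 2 fun t : ℝ => f (x + t • d) := by fun_prop
  have := le_add_mul_deriv_add_of_deriv_deriv_le hray (K := M * (d ⬝ᵥ d))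
    (fun s => by
      rw [deriv_deriv_comp_ray hhessq, ← dotProduct_smul_one_mulVec]
      exact (hupper _).dotProduct_mulVec_le d) ht
  simpa only [zero_smul, add_zero, deriv_comp_ray hgrad] using this

end Ray

section Orthonormal

variable {ι : Type*} [Fintype ι] [DecidableEq ι] {u : ι → ι → ℝ}

theorem of_mul_transpose_of_orthonormal
    (hu : ∀ i j, u i ⬝ᵥ u j = if i = j then 1 else 0) : of u * (of u)ᵀ = 1 := by
  ext i j
  simpa [mul_apply, one_apply, dotProduct] using hu i j

theorem eq_transpose_mul_diagonal_mul_of_mulVec_eq_smul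
    (hu : ∀ i j, u i ⬝ᵥ u j = if i = j then 1 else 0) {A : Matrix ι ι ℝ} {c : ι → ℝ}
    (hA : ∀ i, A *ᵥ u i = c i • u i) : A = (of u)ᵀ * diagonal c * of u := by
  have hAU : A * (of u)ᵀ = (of u)ᵀ * diagonal c := by
    ext i j
    have := congrFun (hA j) i
    simp only [mulVec, dotProduct, Pi.smul_apply, smul_eq_mul] at this
    rw [mul_diagonal, mul_apply]
    simp only [transpose_apply, of_apply]
    rw [this, mul_comm]
  calc A = A * ((of u)ᵀ * of u) := by
        rw [mul_eq_one_comm.mp (of_mul_transpose_of_orthonormal hu), Matrix.mul_one]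
    _ = (of u)ᵀ * diagonal c * of u := by rw [← Matrix.mul_assoc, hAU]

theorem det_eq_prod_of_mulVec_eq_smul
    (hu : ∀ i j, u i ⬝ᵥ u j = if i = j then 1 else 0) {A : Matrix ι ι ℝ} {c : ι → ℝ}
    (hA : ∀ i, A *ᵥ u i = c i • u i) : A.det = ∏ i, c i := by
  have hdet : (of u).det * (of u)ᵀ.det = 1 := by
    rw [← det_mul, of_mul_transpose_of_orthonormal hu, det_one]
  rw [eq_transpose_mul_diagonal_mul_of_mulVec_eq_smul hu hA, det_mul, det_mul, det_diagonal]
  linear_combination (∏ i, c i) * hdet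

theorem dotProduct_mulVec_of_mulVec_eq_smul
    (hu : ∀ i j, u i ⬝ᵥ u j = if i = j then 1 else 0) {A : Matrix ι ι ℝ} {c : ι → ℝ}
    (hA : ∀ i, A *ᵥ u i = c i • u i) (v : ι → ℝ) :
    v ⬝ᵥ (A *ᵥ v) = ∑ i, c i * (u i ⬝ᵥ v) ^ 2 := by
  rw [eq_transpose_mul_diagonal_mul_of_mulVec_eq_smul hu hA, Matrix.mul_assoc,
    ← mulVec_mulVec, dotProduct_mulVec, vecMul_transpose, ← mulVec_mulVec]
  simp only [dotProduct, mulVec_diagonal]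
  exact Finset.sum_congr rfl fun i _ => by rw [mulVec]; simp only [of_apply, dotProduct]; ring

theorem dotProduct_mulVec_le_of_mulVec_eq_smul
    (hu : ∀ i j, u i ⬝ᵥ u j = if i = j then 1 else 0) {A B : Matrix ι ι ℝ} {a b : ι → ℝ}
    (hA : ∀ i, A *ᵥ u i = a i • u i) (hB : ∀ i, B *ᵥ u i = b i • u i) (hab : a ≤ b)
    (v : ι → ℝ) : v ⬝ᵥ (A *ᵥ v) ≤ v ⬝ᵥ (B *ᵥ v) := by
  rw [dotProduct_mulVec_of_mulVec_eq_smul hu hA, dotProduct_mulVec_of_mulVec_eq_smul hu hB]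
  exact Finset.sum_le_sum fun i _ => mul_le_mul_of_nonneg_right (hab i) (sq_nonneg _)

end Orthonormal

/-- With `0`-based indices, `σ ⟨p, hpN⟩` is the paper's `σ_{p+1}`. -/
def coarseTruncation {N p : ℕ} (σ : Fin N → ℝ) (hpN : p < N) (i : Fin N) : ℝ :=
  if (i : ℕ) < p then σ i else σ ⟨p, hpN⟩

theorem le_coarseTruncation {N p : ℕ} {σ : Fin N → ℝ} (hσ : Antitone σ) (hpN : p < N) :
    σ ≤ coarseTruncation σ hpN := fun i => by
  unfold coarseTruncation
  split_ifs with hi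
  · exact le_rfl
  · exact hσ (Fin.le_def.mpr (not_lt.mp hi))

theorem coarseTruncation_pos {N p : ℕ} {σ : Fin N → ℝ} (hσ : ∀ i, 0 < σ i) (hpN : p < N)
    (i : Fin N) : 0 < coarseTruncation σ hpN i := by
  unfold coarseTruncation
  split_ifs <;> exact hσ _

theorem stmt18_general {n N p : ℕ} (hpN : p < N)
    (f : (Fin n → ℝ) → ℝ) (grad : (Fin n → ℝ) → Fin n → ℝ)
    (hess : (Fin n → ℝ) → Matrix (Fin n) (Fin n) ℝ)
    (hf : ContDiff ℝ 2 f)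
    (hgrad : ∀ x u : Fin n → ℝ, deriv (fun t : ℝ => f (x + t • u)) 0 = grad x ⬝ᵥ u)
    (hhessq : ∀ x u : Fin n → ℝ,
      iteratedDeriv 2 (fun t : ℝ => f (x + t • u)) 0 = u ⬝ᵥ (hess x *ᵥ u))
    (m M : ℝ) (hm : 0 < m) (hmM : m ≤ M)
    (hlower : ∀ y, (hess y - m • (1 : Matrix (Fin n) (Fin n) ℝ)).PosSemidef)
    (hupper : ∀ y, (M • (1 : Matrix (Fin n) (Fin n) ℝ) - hess y).PosSemidef)
    (x : Fin n → ℝ)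
    (P : Matrix (Fin n) (Fin N) ℝ)
    (σ : Fin N → ℝ) (u : Fin N → Fin N → ℝ)
    (hσpos : ∀ i, 0 < σ i)
    (hσmono : ∀ i j : Fin N, i ≤ j → σ j ≤ σ i)
    (hortho : ∀ i j : Fin N, u i ⬝ᵥ u j = if i = j then (1 : ℝ) else 0)
    (hHreig : ∀ i, (Pᵀ * hess x * P) *ᵥ u i = σ i • u i)
    (Q : Matrix (Fin N) (Fin N) ℝ)
    (hQeig : ∀ i : Fin N, Q *ᵥ u i = (if (i : ℕ) < p then σ i else σ ⟨p, hpN⟩) • u i)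
    (lamhat : ℝ)
    (hlamhat : lamhat = Real.sqrt (grad x ⬝ᵥ (P *ᵥ (Q⁻¹ *ᵥ (Pᵀ *ᵥ grad x))))) :
    f (x + (m / M) • -(P *ᵥ (Q⁻¹ *ᵥ (Pᵀ *ᵥ grad x)))) - f x
      ≤ -(m / (2 * M)) * lamhat ^ 2 := by
  have hQeig' : ∀ i, Q *ᵥ u i = coarseTruncation σ hpN i • u i := hQeig
  set v := Q⁻¹ *ᵥ (Pᵀ *ᵥ grad x)
  set d := P *ᵥ v
  set s := v ⬝ᵥ (Q *ᵥ v)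
  have hM : 0 < M := hm.trans_le hmM
  have hQinv : Q * Q⁻¹ = 1 := mul_nonsing_inv Q <| by
    rw [det_eq_prod_of_mulVec_eq_smul hortho hQeig']
    exact (Finset.prod_pos fun i _ => coarseTruncation_pos hσpos hpN i).ne'.isUnit
  have hQv : Q *ᵥ v = Pᵀ *ᵥ grad x := by rw [mulVec_mulVec, hQinv, one_mulVec]
  have hgd : grad x ⬝ᵥ d = s := by
    rw [dotProduct_mulVec, ← mulVec_transpose, dotProduct_comm, ← hQv]
  have hmd : m * (d ⬝ᵥ d) ≤ s := calc
    m * (d ⬝ᵥ d) ≤ d ⬝ᵥ (hess x *ᵥ d) := by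
      rw [← dotProduct_smul_one_mulVec]; exact (hlower x).dotProduct_mulVec_le d
    _ = v ⬝ᵥ ((Pᵀ * hess x * P) *ᵥ v) := by
      rw [Matrix.mul_assoc, ← mulVec_mulVec, dotProduct_mulVec (v := v), vecMul_transpose,
        ← mulVec_mulVec]
    _ ≤ s := dotProduct_mulVec_le_of_mulVec_eq_smul hortho hHreig hQeig'
      (le_coarseTruncation hσmono hpN) v
  have hs : 0 ≤ s := (mul_nonneg hm.le (dotProduct_self_star_nonneg d)).trans hmd
  have hdescent := apply_add_smul_le_of_hessian_le hf hgrad hhessq hupper x (-d)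
    (div_pos hm hM).le
  rw [dotProduct_neg, hgd, neg_dotProduct_neg] at hdescent
  rw [hlamhat, Real.sq_sqrt (hgd ▸ hs), hgd]
  have hstep : m / M * -s = -(2 * (m / (2 * M) * s)) := by field_simp
  have hquad : M * (d ⬝ᵥ d) * (m / M) ^ 2 / 2 = m / (2 * M) * (m * (d ⬝ᵥ d)) := by
    field_simp
  linarith [mul_le_mul_of_nonneg_left hmd (div_pos hm (mul_pos two_pos hM)).le]

/-- Let `f : ℝⁿ → ℝ` be twice continuously differentiable
with `m I ⪯ ∇²f(y) ⪯ M I` for all `y`, `0 < m ≤ M`.  Fix `x`, let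
`H := ∇²f(x)`, `P` an `n×N` matrix of full column rank, `H_r := Pᵀ H P`, `Q`
the coarse truncated approximation of `H_r` with parameter `p`,
`λ̂ = (∇f(x)ᵀ P Q⁻¹ Pᵀ ∇f(x))^{1/2}` and `d̂ = −P Q⁻¹ Pᵀ ∇f(x)`.  Then with
step size `t := m/M` one has `f(x + t d̂) − f(x) ≤ −(m/(2M)) λ̂²`. -/
theorem stmt18 {n N p : ℕ} (hp : 1 ≤ p) (hpN : p < N) (hNn : N < n)
    (f : (Fin n → ℝ) → ℝ) (grad : (Fin n → ℝ) → Fin n → ℝ)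
    (hess : (Fin n → ℝ) → Matrix (Fin n) (Fin n) ℝ)
    (hf : ContDiff ℝ 2 f)
    (hgrad : ∀ x u : Fin n → ℝ, deriv (fun t : ℝ => f (x + t • u)) 0 = grad x ⬝ᵥ u)
    (hhessq : ∀ x u : Fin n → ℝ,
      iteratedDeriv 2 (fun t : ℝ => f (x + t • u)) 0 = u ⬝ᵥ (hess x *ᵥ u))
    (hhsymm : ∀ x, (hess x).IsSymm)
    (m M : ℝ) (hm : 0 < m) (hmM : m ≤ M)
    (hlower : ∀ y, (hess y - m • (1 : Matrix (Fin n) (Fin n) ℝ)).PosSemidef)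
    (hupper : ∀ y, (M • (1 : Matrix (Fin n) (Fin n) ℝ) - hess y).PosSemidef)
    (x : Fin n → ℝ)
    (P : Matrix (Fin n) (Fin N) ℝ) (hP : P.rank = N)
    (σ : Fin N → ℝ) (u : Fin N → Fin N → ℝ)
    (hσpos : ∀ i, 0 < σ i)
    (hσmono : ∀ i j : Fin N, i ≤ j → σ j ≤ σ i)
    (hortho : ∀ i j : Fin N, u i ⬝ᵥ u j = if i = j then (1 : ℝ) else 0)
    (hHreig : ∀ i, (Pᵀ * hess x * P) *ᵥ u i = σ i • u i)
    (Q : Matrix (Fin N) (Fin N) ℝ) (hQsymm : Q.IsSymm)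
    (hQeig : ∀ i : Fin N, Q *ᵥ u i = (if (i : ℕ) < p then σ i else σ ⟨p, hpN⟩) • u i)
    (lamhat : ℝ)
    (hlamhat : lamhat = Real.sqrt (grad x ⬝ᵥ (P *ᵥ (Q⁻¹ *ᵥ (Pᵀ *ᵥ grad x))))) :
    f (x + (m / M) • -(P *ᵥ (Q⁻¹ *ᵥ (Pᵀ *ᵥ grad x)))) - f x
      ≤ -(m / (2 * M)) * lamhat ^ 2 :=
  stmt18_general hpN f grad hess hf hgrad hhessq m M hm hmM hlower hupper x P σ u hσpos hσmono
    hortho hHreig Q hQeig lamhat hlamhat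
end

section
/- Let f : ℝⁿ → ℝ be twice continuously differentiable with ∇²f(y) ⪯ M I for all y (M > 0), bounded below with infimum f* attained at some x*, and satisfying the Polyak–Łojasiewicz inequality (1/2)‖∇f(y)‖² ≥ ξ (f(y) − f*) for all y, with ξ > 0. Fix x and suppose the symmetric matrix ∇²f(x) has eigenvalues ordered by magnitude |σ_1| ≥ |σ_2| ≥ … ≥ |σ_n| with orthonormal eigenvectors u_1, …, u_n, and let 1 ≤ p < n with |σ_{p+1}| > 0. Define the truncated positive definite matrix B with the same eigenvectors and eigenvalues 1/|σ_1|, …, 1/|σ_p|, 1/|σ_{p+1}|, …, 1/|σ_{p+1}|, and set d̂ := −B ∇f(x) and t := |σ_{p+1}|²/(M |σ_1|). Then f(x + t d̂) − f(x) ≤ −(|σ_{p+1}|²/(2 M |σ_1|²)) ‖∇f(x)‖² ≤ −(ξ/M)(|σ_{p+1}|²/|σ_1|²)(f(x) − f*). -/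
open Matrix

/-!
The descent lemma `f (x + t d) ≤ f x + t ⟨∇f x, d⟩ + (M/2) t² ‖d‖²` follows from `∇²f ⪯ M I`
by restricting `f` to the line through `x` in direction `d`. In the eigenbasis of `B` the
truncated spectrum lies in `[1/|σ₁|, 1/|σ_{p+1}|]`, so `⟨g, B g⟩ ≥ ‖g‖²/|σ₁|` and
`‖B g‖² ≤ ‖g‖²/|σ_{p+1}|²`; with `d = -B g` and the chosen step both terms combine to
`-(|σ_{p+1}|²/(2M|σ₁|²)) ‖g‖²`, and the PL inequality converts `‖g‖²` into `f x - f*`.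
-/

theorem le_add_mul_deriv_add_of_iteratedDeriv_two_le {φ : ℝ → ℝ} {K : ℝ} (hφ : ContDiff ℝ 2 φ)
    (hK : ∀ s, iteratedDeriv 2 φ s ≤ K) (t : ℝ) :
    φ t ≤ φ 0 + t * deriv φ 0 + K / 2 * t ^ 2 := by
  have hφ' : ∀ s, HasDerivAt φ (deriv φ s) s := fun s =>
    ((hφ.differentiable (by norm_num)) s).hasDerivAt
  have hφ'' : ∀ s, HasDerivAt (deriv φ) (iteratedDeriv 2 φ s) s := fun s => by
    simpa [iteratedDeriv_succ] using
      ((hφ.differentiable_iteratedDeriv 1 (by norm_num)) s).hasDerivAt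
  -- `K s² / 2 - φ` has nonnegative second derivative, so it lies above its tangent at `0`
  set ψ : ℝ → ℝ := fun s => K / 2 * s ^ 2 - φ s
  have hψ' : ∀ s, HasDerivAt ψ (K * s - deriv φ s) s := fun s =>
    (((hasDerivAt_pow 2 s).const_mul (K / 2)).sub (hφ' s)).congr_deriv (by norm_num; ring)
  have hψ'' : ∀ s, HasDerivAt (fun s => K * s - deriv φ s) (K - iteratedDeriv 2 φ s) s :=
    fun s => (((hasDerivAt_id s).const_mul K).sub (hφ'' s)).congr_deriv (by ring)
  have hconv : ConvexOn ℝ Set.univ ψ := by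
    exact convexOn_of_hasDerivWithinAt2_nonneg convex_univ
      (fun s _ => (hψ' s).continuousAt.continuousWithinAt) (fun s _ => (hψ' s).hasDerivWithinAt)
      (fun s _ => (hψ'' s).hasDerivWithinAt) fun s _ => sub_nonneg.mpr (hK s)
  rcases lt_trichotomy t 0 with ht | rfl | ht
  · have := hconv.slope_le_of_hasDerivAt trivial trivial ht (hψ' 0)
    rw [slope_def_field, div_le_iff₀ (by linarith)] at this
    simp only [ψ] at this
    linarith
  · simp
  · have := hconv.le_slope_of_hasDerivAt trivial trivial ht (hψ' 0)
    rw [slope_def_field, le_div_iff₀ (by linarith)] at this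
    simp only [ψ] at this
    linarith

theorem dotProduct_mulVec_le_of_posSemidef {m : Type*} [Fintype m] [DecidableEq m]
    {H : Matrix m m ℝ} {M : ℝ} (hH : (M • (1 : Matrix m m ℝ) - H).PosSemidef) (v : m → ℝ) :
    v ⬝ᵥ (H *ᵥ v) ≤ M * (v ⬝ᵥ v) := by
  have := hH.dotProduct_mulVec_nonneg v
  simp only [star_trivial, sub_mulVec, smul_mulVec, one_mulVec, dotProduct_sub,
    dotProduct_smul, smul_eq_mul] at this
  linarith

section Orthonormal

variable {ι : Type*} [Fintype ι] [DecidableEq ι] {u : ι → ι → ℝ}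

theorem sum_smul_dotProduct_sum_smul (hu : ∀ i j, u i ⬝ᵥ u j = if i = j then 1 else 0)
    (a b : ι → ℝ) : (∑ i, a i • u i) ⬝ᵥ (∑ j, b j • u j) = ∑ i, a i * b i := by
  simp [sum_dotProduct, dotProduct_sum, hu, mul_comm]

theorem eq_sum_dotProduct_smul (hu : ∀ i j, u i ⬝ᵥ u j = if i = j then 1 else 0)
    (v : ι → ℝ) : v = ∑ i, (u i ⬝ᵥ v) • u i := by
  have hU : of u * (of u)ᵀ = 1 := by
    ext i j
    simpa [mul_apply, one_apply, dotProduct] using hu i j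
  calc v = v ᵥ* ((of u)ᵀ * of u) := by rw [mul_eq_one_comm.mp hU, vecMul_one]
    _ = ∑ i, (u i ⬝ᵥ v) • u i := by rw [← vecMul_vecMul, vecMul_transpose, vecMul_eq_sum]; rfl

variable {B : Matrix ι ι ℝ} {μ : ι → ℝ}

theorem mulVec_eq_sum_smul (hu : ∀ i j, u i ⬝ᵥ u j = if i = j then 1 else 0)
    (hB : ∀ i, B *ᵥ u i = μ i • u i) (v : ι → ℝ) :
    B *ᵥ v = ∑ i, (μ i * (u i ⬝ᵥ v)) • u i := by
  conv_lhs => rw [eq_sum_dotProduct_smul hu v]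
  simp only [mulVec_sum, mulVec_smul, hB, smul_smul, mul_comm]

theorem dotProduct_mulVec_eq_sum (hu : ∀ i j, u i ⬝ᵥ u j = if i = j then 1 else 0)
    (hB : ∀ i, B *ᵥ u i = μ i • u i) (v : ι → ℝ) :
    v ⬝ᵥ (B *ᵥ v) = ∑ i, μ i * (u i ⬝ᵥ v) ^ 2 := by
  rw [mulVec_eq_sum_smul hu hB, dotProduct_sum]
  congr! 1 with i
  rw [dotProduct_smul, dotProduct_comm, smul_eq_mul]
  ring

theorem dotProduct_self_eq_sum (hu : ∀ i j, u i ⬝ᵥ u j = if i = j then 1 else 0) (v : ι → ℝ) :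
    v ⬝ᵥ v = ∑ i, (u i ⬝ᵥ v) ^ 2 := by
  simpa using dotProduct_mulVec_eq_sum (B := 1) (μ := 1) hu (fun i => by simp) v

theorem mulVec_dotProduct_mulVec_eq_sum (hu : ∀ i j, u i ⬝ᵥ u j = if i = j then 1 else 0)
    (hB : ∀ i, B *ᵥ u i = μ i • u i) (v : ι → ℝ) :
    (B *ᵥ v) ⬝ᵥ (B *ᵥ v) = ∑ i, μ i ^ 2 * (u i ⬝ᵥ v) ^ 2 := by
  rw [mulVec_eq_sum_smul hu hB, sum_smul_dotProduct_sum_smul hu]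
  congr! 1 with i; ring

theorem mul_dotProduct_self_le_dotProduct_mulVec
    (hu : ∀ i j, u i ⬝ᵥ u j = if i = j then 1 else 0) (hB : ∀ i, B *ᵥ u i = μ i • u i)
    {α : ℝ} (hα : ∀ i, α ≤ μ i) (v : ι → ℝ) : α * (v ⬝ᵥ v) ≤ v ⬝ᵥ (B *ᵥ v) := by
  rw [dotProduct_self_eq_sum hu v, dotProduct_mulVec_eq_sum hu hB, Finset.mul_sum]
  gcongr with i
  exact hα i

theorem mulVec_dotProduct_mulVec_le_sq_mul
    (hu : ∀ i j, u i ⬝ᵥ u j = if i = j then 1 else 0) (hB : ∀ i, B *ᵥ u i = μ i • u i)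
    {β : ℝ} (hμ : ∀ i, 0 ≤ μ i ∧ μ i ≤ β) (v : ι → ℝ) :
    (B *ᵥ v) ⬝ᵥ (B *ᵥ v) ≤ β ^ 2 * (v ⬝ᵥ v) := by
  rw [mulVec_dotProduct_mulVec_eq_sum hu hB, dotProduct_self_eq_sum hu v, Finset.mul_sum]
  gcongr with i
  exacts [(hμ i).1, (hμ i).2]

end Orthonormal

theorem descent_lemma {m : Type*} [Fintype m] [DecidableEq m] {f : (m → ℝ) → ℝ}
    {grad : (m → ℝ) → m → ℝ} {hess : (m → ℝ) → Matrix m m ℝ} (hf : ContDiff ℝ 2 f)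
    (hgrad : ∀ x u : m → ℝ, deriv (fun t : ℝ => f (x + t • u)) 0 = grad x ⬝ᵥ u)
    (hhessq : ∀ x u : m → ℝ,
      iteratedDeriv 2 (fun t : ℝ => f (x + t • u)) 0 = u ⬝ᵥ (hess x *ᵥ u))
    {M : ℝ} (hupper : ∀ y, (M • (1 : Matrix m m ℝ) - hess y).PosSemidef) (x d : m → ℝ) (t : ℝ) :
    f (x + t • d) ≤ f x + t * (grad x ⬝ᵥ d) + M / 2 * t ^ 2 * (d ⬝ᵥ d) := by
  have hline : ContDiff ℝ 2 fun r : ℝ => f (x + r • d) :=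
    hf.comp (contDiff_const.add (contDiff_id.smul contDiff_const))
  have hcurv : ∀ s, iteratedDeriv 2 (fun r : ℝ => f (x + r • d)) s ≤ M * (d ⬝ᵥ d) := by
    intro s
    have hshift := congrFun (iteratedDeriv_comp_const_add 2 (fun r : ℝ => f (x + r • d)) s) 0
    simp only [add_zero, add_smul, ← add_assoc] at hshift
    rw [← hshift, hhessq]
    exact dotProduct_mulVec_le_of_posSemidef (hupper _) d
  have := le_add_mul_deriv_add_of_iteratedDeriv_two_le hline hcurv t
  rw [hgrad] at this
  simp only [zero_smul, add_zero] at this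
  linarith

theorem sub_le_of_preconditioned_step {m : Type*} [Fintype m] [DecidableEq m]
    {f : (m → ℝ) → ℝ} {grad : (m → ℝ) → m → ℝ} {hess : (m → ℝ) → Matrix m m ℝ}
    (hf : ContDiff ℝ 2 f)
    (hgrad : ∀ x u : m → ℝ, deriv (fun t : ℝ => f (x + t • u)) 0 = grad x ⬝ᵥ u)
    (hhessq : ∀ x u : m → ℝ,
      iteratedDeriv 2 (fun t : ℝ => f (x + t • u)) 0 = u ⬝ᵥ (hess x *ᵥ u))
    {M : ℝ} (hM : 0 < M) (hupper : ∀ y, (M • (1 : Matrix m m ℝ) - hess y).PosSemidef)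
    (x : m → ℝ) {B : Matrix m m ℝ} {α β : ℝ} (hα : 0 ≤ α) (hβ : 0 < β)
    (hlow : α * (grad x ⬝ᵥ grad x) ≤ grad x ⬝ᵥ (B *ᵥ grad x))
    (hup : (B *ᵥ grad x) ⬝ᵥ (B *ᵥ grad x) ≤ β ^ 2 * (grad x ⬝ᵥ grad x)) :
    f (x + (α / (M * β ^ 2)) • -(B *ᵥ grad x)) - f x
      ≤ -(α ^ 2 / (2 * M * β ^ 2)) * (grad x ⬝ᵥ grad x) := by
  set g := grad x
  set t := α / (M * β ^ 2)
  have ht : 0 ≤ t := by positivity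
  have hdesc := descent_lemma hf hgrad hhessq hupper x (-(B *ᵥ g)) t
  rw [dotProduct_neg, neg_dotProduct, dotProduct_neg, neg_neg] at hdesc
  calc f (x + t • -(B *ᵥ g)) - f x
      ≤ -t * (α * (g ⬝ᵥ g)) + M / 2 * t ^ 2 * (β ^ 2 * (g ⬝ᵥ g)) := by
        linarith [mul_le_mul_of_nonneg_left hlow ht,
          mul_le_mul_of_nonneg_left hup (by positivity : 0 ≤ M / 2 * t ^ 2)]
    _ = -(α ^ 2 / (2 * M * β ^ 2)) * (g ⬝ᵥ g) := by
        simp only [t]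
        field_simp
        ring

/-- The eigenvalues of the paper's truncated matrix `B`, with `k` the 0-based index of `σ_{p+1}`. -/
noncomputable def truncatedInvAbs {ι : Type*} [LinearOrder ι] (σ : ι → ℝ) (k i : ι) : ℝ :=
  if i < k then |σ i|⁻¹ else |σ k|⁻¹

theorem truncatedInvAbs_mem_Icc {ι : Type*} [LinearOrder ι] {σ : ι → ℝ}
    (hσ : Antitone fun i => |σ i|) {j k : ι} (hj : IsBot j) (hk : 0 < |σ k|) (i : ι) :
    truncatedInvAbs σ k i ∈ Set.Icc |σ j|⁻¹ |σ k|⁻¹ := by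
  unfold truncatedInvAbs
  split_ifs with hik
  · exact ⟨inv_anti₀ (hk.trans_le (hσ hik.le)) (hσ (hj i)), inv_anti₀ hk (hσ hik.le)⟩
  · exact ⟨inv_anti₀ hk (hσ (hj k)), le_rfl⟩

/-- Let `f : ℝⁿ → ℝ` be twice continuously differentiable
with `∇²f(y) ⪯ M I` for all `y` (`M > 0`), bounded below with infimum attained
at `x*`, satisfying the Polyak–Łojasiewicz inequality
`(1/2)‖∇f(y)‖² ≥ ξ (f(y) − f(x*))` for all `y` with `ξ > 0`.  Fix `x` whose
Hessian `∇²f(x)` has eigenvalues ordered by magnitude `|σ_1| ≥ … ≥ |σ_n|` with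
orthonormal eigenvectors `u_i`, let `1 ≤ p < n` with `|σ_{p+1}| > 0`, and let
`B` be the truncated positive definite matrix with the same eigenvectors and
eigenvalues `1/|σ_1|, …, 1/|σ_p|, 1/|σ_{p+1}|, …, 1/|σ_{p+1}|`
(0-based: eigenvalue `1/|σ_i|` for `i < p`, else `1/|σ_p|`).  With
`d̂ := −B ∇f(x)` and `t := |σ_{p+1}|²/(M |σ_1|)`,
`f(x + t d̂) − f(x) ≤ −(|σ_{p+1}|²/(2 M |σ_1|²)) ‖∇f(x)‖²
  ≤ −(ξ/M)(|σ_{p+1}|²/|σ_1|²)(f(x) − f(x*))`. -/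
theorem stmt19 {n p : ℕ} (hpn : p < n)
    (f : (Fin n → ℝ) → ℝ) (grad : (Fin n → ℝ) → Fin n → ℝ)
    (hess : (Fin n → ℝ) → Matrix (Fin n) (Fin n) ℝ)
    (hf : ContDiff ℝ 2 f)
    (hgrad : ∀ x u : Fin n → ℝ, deriv (fun t : ℝ => f (x + t • u)) 0 = grad x ⬝ᵥ u)
    (hhessq : ∀ x u : Fin n → ℝ,
      iteratedDeriv 2 (fun t : ℝ => f (x + t • u)) 0 = u ⬝ᵥ (hess x *ᵥ u))
    (M : ℝ) (hM : 0 < M)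
    (hupper : ∀ y, (M • (1 : Matrix (Fin n) (Fin n) ℝ) - hess y).PosSemidef)
    (xstar : Fin n → ℝ)
    (ξ : ℝ)
    (hPL : ∀ y, ξ * (f y - f xstar) ≤ (1 / 2) * (grad y ⬝ᵥ grad y))
    (x : Fin n → ℝ)
    (σ : Fin n → ℝ) (u : Fin n → Fin n → ℝ)
    (hσmono : ∀ i j : Fin n, i ≤ j → |σ j| ≤ |σ i|)
    (hortho : ∀ i j : Fin n, u i ⬝ᵥ u j = if i = j then (1 : ℝ) else 0)
    (hσp : 0 < |σ ⟨p, hpn⟩|)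
    (B : Matrix (Fin n) (Fin n) ℝ)
    (hBeig : ∀ i : Fin n,
      B *ᵥ u i = (if (i : ℕ) < p then |σ i|⁻¹ else |σ ⟨p, hpn⟩|⁻¹) • u i) :
    f (x + (|σ ⟨p, hpn⟩| ^ 2 / (M * |σ ⟨0, by omega⟩|)) • -(B *ᵥ grad x)) - f x
        ≤ -(|σ ⟨p, hpn⟩| ^ 2 / (2 * M * |σ ⟨0, by omega⟩| ^ 2)) * (grad x ⬝ᵥ grad x) ∧
    -(|σ ⟨p, hpn⟩| ^ 2 / (2 * M * |σ ⟨0, by omega⟩| ^ 2)) * (grad x ⬝ᵥ grad x)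
        ≤ -(ξ / M) * (|σ ⟨p, hpn⟩| ^ 2 / |σ ⟨0, by omega⟩| ^ 2) * (f x - f xstar) := by
  set a := |σ ⟨0, by omega⟩|
  set b := |σ ⟨p, hpn⟩|
  have hB : ∀ i, B *ᵥ u i = truncatedInvAbs σ ⟨p, hpn⟩ i • u i := hBeig
  have hspec := truncatedInvAbs_mem_Icc (fun i j h => hσmono i j h)
    (j := ⟨0, by omega⟩) (fun i => Nat.zero_le i) hσp
  have ha : 0 < a := hσp.trans_le (hσmono _ _ (Nat.zero_le p))
  have hlow := mul_dotProduct_self_le_dotProduct_mulVec hortho hB (fun i => (hspec i).1) (grad x)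
  have hup := mulVec_dotProduct_mulVec_le_sq_mul hortho hB
    (fun i => ⟨(inv_pos.mpr ha).le.trans (hspec i).1, (hspec i).2⟩) (grad x)
  have hstep := sub_le_of_preconditioned_step hf hgrad hhessq hM hupper x
    (inv_pos.mpr ha).le (inv_pos.mpr hσp) hlow hup
  refine ⟨?_, ?_⟩
  · have hstepsize : b ^ 2 / (M * a) = a⁻¹ / (M * b⁻¹ ^ 2) := by field_simp
    have hrate : b ^ 2 / (2 * M * a ^ 2) = a⁻¹ ^ 2 / (2 * M * b⁻¹ ^ 2) := by field_simp
    rwa [hstepsize, hrate]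
  · linear_combination (b ^ 2 / (M * a ^ 2)) * hPL x
end
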